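/- For n ≥ 2 agents there is a call sequence of length 3n−4 after which, in the engaged-agents asynchronous ANY semantics, every agent is a super expert: a fixed agent a calls all other agents (n−1 calls), then calls them again in the same order except the last one (n−2 calls), and finally every other agent calls a (n−1 missed calls). -/

import Mathlib

/-!
In the first round `a` learns every secret, and so does `b`, the last agent it calls; in the
second round `a` passes everything on to the remaining agents. Having taken part in all these
calls, `a` has *observed* a full row for every agent, and what an agent has observed is
invariant under its indistinguishability relation, so from then on `a` is a super expert.
In the last round every other agent `x` calls `a`, a missed call. Whether `x` has made a missed
call is again invariant under the relation of `x`, and once it has, the secrets are full on both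
sides, because the callee was a super expert at a sequence related to itself.
-/

variable {A : Type*}

/-- Effect of one call `c` on a secret relation `S`:
`S ∪ ({(x,y),(y,x)} ∘ S)` where `c = (x,y)`. -/
def gstep (S : Set (A × A)) (c : A × A) : Set (A × A) :=
  S ∪ {p | (p.1 = c.1 ∧ (c.2, p.2) ∈ S) ∨ (p.1 = c.2 ∧ (c.1, p.2) ∈ S)}

/-- `S^σ`: the result of applying the call sequence `σ` to `S`. -/
def applyCalls (S : Set (A × A)) (σ : List (A × A)) : Set (A × A) :=
  σ.foldl gstep S

/-- `I^σ`: the secret relation generated by `σ` from the identity relation. -/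
def secrets (σ : List (A × A)) : Set (A × A) :=
  applyCalls {p | p.1 = p.2} σ

/-- `I^σ_x`: the set of secrets agent `x` knows after `σ`. -/
def secretsOf (σ : List (A × A)) (x : A) : Set A :=
  {z | (x, z) ∈ secrets σ}

/-- `a` is a super expert at `σ` w.r.t. relation `R`: `a` knows `Exp_A`. -/
def SEx (R : A → List (A × A) → List (A × A) → Prop) (x : A)
    (σ : List (A × A)) : Prop :=
  ∀ τ, R x σ τ → secrets τ = (Set.univ : Set (A × A))

/-- `Q` is closed under the clauses of the engaged-agents asynchronous
epistemic relation for protocol `P`, where the super-expert side conditions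
refer to the relation `R` itself. -/
def EngagedClosed (P : A → A → List (A × A) → Prop)
    (R Q : A → List (A × A) → List (A × A) → Prop) : Prop :=
  (∀ a : A, Q a [] []) ∧
  (∀ a σ τ, Q a σ τ → Q a τ σ) ∧
  (∀ a σ τ ρ, Q a σ τ → Q a τ ρ → Q a σ ρ) ∧
  (∀ (a b c : A) σ τ, Q a σ τ → a ≠ b → a ≠ c →
      ¬ SEx R b σ → P b c σ → Q a (σ ++ [(b, c)]) τ) ∧
  (∀ (a b : A) σ τ, Q a σ τ → secretsOf σ b = secretsOf τ b →
      ¬ SEx R a σ → P a b σ → ¬ SEx R a τ → P a b τ →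
      (SEx R b σ ↔ SEx R b τ) →
      Q a (σ ++ [(a, b)]) (τ ++ [(a, b)])) ∧
  (∀ (a b : A) σ τ, Q a σ τ → secretsOf σ b = secretsOf τ b →
      ¬ SEx R b σ → P b a σ → ¬ SEx R b τ → P b a τ →
      (SEx R a σ ↔ SEx R a τ) →
      Q a (σ ++ [(b, a)]) (τ ++ [(b, a)]))

/-- `R` is the engaged-agents asynchronous epistemic relation for protocol `P`:
the smallest symmetric transitive relation satisfying the clauses. -/
def IsEngagedRel (P : A → A → List (A × A) → Prop)
    (R : A → List (A × A) → List (A × A) → Prop) : Prop :=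
  EngagedClosed P R R ∧
  ∀ Q, EngagedClosed P R Q → ∀ a σ τ, R a σ τ → Q a σ τ

lemma exists_concat_prefix_concat_iff {α : Type*} {Φ : List α → α → Prop} {σ : List α}
    {d : α} :
    (∃ σ' c, σ' ++ [c] <+: σ ++ [d] ∧ Φ σ' c) ↔
      (∃ σ' c, σ' ++ [c] <+: σ ∧ Φ σ' c) ∨ Φ σ d := by
  simp [List.prefix_concat_iff, or_and_right, exists_or, or_comm]

lemma secrets_append (σ ρ : List (A × A)) : secrets (σ ++ ρ) = applyCalls (secrets σ) ρ :=
  List.foldl_append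

lemma secrets_concat (σ : List (A × A)) (c : A × A) :
    secrets (σ ++ [c]) = gstep (secrets σ) c := by
  rw [secrets_append]; rfl

lemma subset_applyCalls (S : Set (A × A)) (σ : List (A × A)) : S ⊆ applyCalls S σ := by
  induction σ generalizing S with
  | nil => exact subset_rfl
  | cons c σ ih => exact Set.subset_union_left.trans (ih (gstep S c))

lemma secretsOf_concat_of_ne {σ : List (A × A)} {c : A × A} {u : A} (h₁ : u ≠ c.1)
    (h₂ : u ≠ c.2) : secretsOf (σ ++ [c]) u = secretsOf σ u := by
  ext z
  simp [secretsOf, secrets_concat, gstep, h₁, h₂]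

lemma secretsOf_concat_of_mem {σ : List (A × A)} {c : A × A} {u : A} (h : u = c.1 ∨ u = c.2) :
    secretsOf (σ ++ [c]) u = secretsOf σ c.1 ∪ secretsOf σ c.2 := by
  ext z
  rcases h with rfl | rfl <;> simp [secretsOf, secrets_concat, gstep] <;> tauto

lemma secrets_mono {σ τ : List (A × A)} (h : σ <+: τ) : secrets σ ⊆ secrets τ := by
  obtain ⟨ρ, rfl⟩ := h
  rw [secrets_append]
  exact subset_applyCalls _ _

lemma secrets_eq_univ_of_prefix {σ τ : List (A × A)} (h : σ <+: τ)
    (hσ : secrets σ = Set.univ) : secrets τ = Set.univ :=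
  Set.eq_univ_of_univ_subset (hσ ▸ secrets_mono h)

lemma secretsOf_mono {σ τ : List (A × A)} (h : σ <+: τ) (u : A) :
    secretsOf σ u ⊆ secretsOf τ u :=
  fun _ hz => secrets_mono h hz

lemma mem_secretsOf_self (σ : List (A × A)) (u : A) : u ∈ secretsOf σ u :=
  subset_applyCalls _ σ rfl

/-- Rows only grow along a call sequence, so the rows that `x` has seen in its own calls are a
lower bound for the secrets of every sequence `x` cannot tell apart from `σ`. -/
def observed (x : A) (σ : List (A × A)) : Set (A × A) :=
  {p | ∃ σ' c, σ' ++ [c] <+: σ ∧ (x = c.1 ∨ x = c.2) ∧ (p.1 = c.1 ∨ p.1 = c.2) ∧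
    p ∈ secrets (σ' ++ [c])}

lemma observed_concat (x : A) (σ : List (A × A)) (c : A × A) :
    observed x (σ ++ [c]) = observed x σ ∪
      {p | (x = c.1 ∨ x = c.2) ∧ (p.1 = c.1 ∨ p.1 = c.2) ∧ p ∈ secrets (σ ++ [c])} := by
  ext p
  exact exists_concat_prefix_concat_iff

lemma observed_concat_of_ne {x : A} {σ : List (A × A)} {c : A × A} (h₁ : x ≠ c.1)
    (h₂ : x ≠ c.2) : observed x (σ ++ [c]) = observed x σ := by
  simp [observed_concat, h₁, h₂]

lemma observed_concat_congr {x : A} {σ τ : List (A × A)} {c : A × A}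
    (h₁ : secretsOf σ c.1 = secretsOf τ c.1) (h₂ : secretsOf σ c.2 = secretsOf τ c.2)
    (h : observed x σ = observed x τ) : observed x (σ ++ [c]) = observed x (τ ++ [c]) := by
  rw [observed_concat, observed_concat, h]
  congr 1
  ext ⟨u, z⟩
  refine and_congr_right fun _ => and_congr_right fun hu => ?_
  change z ∈ secretsOf (σ ++ [c]) u ↔ z ∈ secretsOf (τ ++ [c]) u
  rw [secretsOf_concat_of_mem hu, secretsOf_concat_of_mem hu, h₁, h₂]

lemma observed_subset_secrets (x : A) (σ : List (A × A)) : observed x σ ⊆ secrets σ :=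
  fun _ ⟨_, _, hpre, _, _, hp⟩ => secrets_mono hpre hp

lemma observed_mono {x : A} {σ τ : List (A × A)} (h : σ <+: τ) : observed x σ ⊆ observed x τ :=
  fun _ ⟨σ', c, hpre, hx, hp⟩ => ⟨σ', c, hpre.trans h, hx, hp⟩

lemma mem_observed_of_prefix {x u v : A} {σ' σ : List (A × A)} (h : σ' ++ [(x, u)] <+: σ)
    (hfull : secretsOf (σ' ++ [(x, u)]) x = Set.univ) (hv : v = x ∨ v = u) (z : A) :
    (v, z) ∈ observed x σ := by
  refine ⟨σ', (x, u), h, Or.inl rfl, hv, ?_⟩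
  change z ∈ secretsOf (σ' ++ [(x, u)]) v
  rw [secretsOf_concat_of_mem hv, ← secretsOf_concat_of_mem (Or.inl rfl), hfull]
  trivial

section Engaged

variable {P : A → A → List (A × A) → Prop} {R : A → List (A × A) → List (A × A) → Prop}

theorem IsEngagedRel.induction (hR : IsEngagedRel P R)
    (M : A → List (A × A) → List (A × A) → Prop)
    (base : ∀ a, M a [] [])
    (symm : ∀ a σ τ, R a σ τ → M a σ τ → M a τ σ)
    (trans : ∀ a σ τ ρ, R a σ τ → R a τ ρ → M a σ τ → M a τ ρ → M a σ ρ)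
    (call_other : ∀ a b c σ τ, R a σ τ → M a σ τ → a ≠ b → a ≠ c → ¬ SEx R b σ →
      P b c σ → M a (σ ++ [(b, c)]) τ)
    (call_out : ∀ a b σ τ, R a σ τ → M a σ τ → secretsOf σ b = secretsOf τ b →
      ¬ SEx R a σ → P a b σ → ¬ SEx R a τ → P a b τ → (SEx R b σ ↔ SEx R b τ) →
      M a (σ ++ [(a, b)]) (τ ++ [(a, b)]))
    (call_in : ∀ a b σ τ, R a σ τ → M a σ τ → secretsOf σ b = secretsOf τ b →
      ¬ SEx R b σ → P b a σ → ¬ SEx R b τ → P b a τ → (SEx R a σ ↔ SEx R a τ) →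
      M a (σ ++ [(b, a)]) (τ ++ [(b, a)]))
    {a : A} {σ τ : List (A × A)} (h : R a σ τ) : M a σ τ := by
  obtain ⟨⟨hbase, hsymm, htrans, hother, hout, hin⟩, hmin⟩ := hR
  refine (hmin (fun a σ τ => R a σ τ ∧ M a σ τ) ⟨?_, ?_, ?_, ?_, ?_, ?_⟩ a σ τ h).2
  · exact fun a => ⟨hbase a, base a⟩
  · exact fun a σ τ ⟨h, hM⟩ => ⟨hsymm a σ τ h, symm a σ τ h hM⟩
  · exact fun a σ τ ρ ⟨h, hM⟩ ⟨h', hM'⟩ => ⟨htrans a σ τ ρ h h', trans a σ τ ρ h h' hM hM'⟩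
  · exact fun a b c σ τ ⟨h, hM⟩ hb hc hn hP =>
      ⟨hother a b c σ τ h hb hc hn hP, call_other a b c σ τ h hM hb hc hn hP⟩
  · exact fun a b σ τ ⟨h, hM⟩ hrow hnσ hPσ hnτ hPτ hiff =>
      ⟨hout a b σ τ h hrow hnσ hPσ hnτ hPτ hiff,
        call_out a b σ τ h hM hrow hnσ hPσ hnτ hPτ hiff⟩
  · exact fun a b σ τ ⟨h, hM⟩ hrow hnσ hPσ hnτ hPτ hiff =>
      ⟨hin a b σ τ h hrow hnσ hPσ hnτ hPτ hiff,
        call_in a b σ τ h hM hrow hnσ hPσ hnτ hPτ hiff⟩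

lemma IsEngagedRel.rel_self_concat (hR : IsEngagedRel P R) {ρ : List (A × A)} {b c : A}
    (hρ : ∀ z, R z ρ ρ) (hn : ¬ SEx R b ρ) (hP : P b c ρ) (z : A) :
    R z (ρ ++ [(b, c)]) (ρ ++ [(b, c)]) := by
  obtain ⟨⟨-, hsymm, htrans, hother, hout, hin⟩, -⟩ := hR
  by_cases hzb : z = b
  · subst hzb
    exact hout z c ρ ρ (hρ z) rfl hn hP hn hP Iff.rfl
  by_cases hzc : z = c
  · subst hzc
    exact hin z b ρ ρ (hρ z) rfl hn hP hn hP Iff.rfl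
  have h := hother z b c ρ ρ (hρ z) hzb hzc hn hP
  exact htrans _ _ _ _ h (hsymm _ _ _ h)

lemma IsEngagedRel.rel_self_left (hR : IsEngagedRel P R) {a : A} {σ τ : List (A × A)}
    (h : R a σ τ) (b : A) : R b σ σ := by
  refine (hR.induction (fun _ σ τ => ∀ b, R b σ σ ∧ R b τ τ) ?_ ?_ ?_ ?_ ?_ ?_ h b).1
  · exact fun _ b => ⟨hR.1.1 b, hR.1.1 b⟩
  · exact fun _ _ _ _ hM b => (hM b).symm
  · exact fun _ _ _ _ _ _ hM hM' b => ⟨(hM b).1, (hM' b).2⟩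
  · exact fun _ _ _ _ _ _ hM _ _ hn hP z =>
      ⟨hR.rel_self_concat (fun z => (hM z).1) hn hP z, (hM z).2⟩
  · exact fun _ _ _ _ _ hM _ hnσ hPσ hnτ hPτ _ z =>
      ⟨hR.rel_self_concat (fun z => (hM z).1) hnσ hPσ z,
        hR.rel_self_concat (fun z => (hM z).2) hnτ hPτ z⟩
  · exact fun _ _ _ _ _ hM _ hnσ hPσ hnτ hPτ _ z =>
      ⟨hR.rel_self_concat (fun z => (hM z).1) hnσ hPσ z,
        hR.rel_self_concat (fun z => (hM z).2) hnτ hPτ z⟩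

lemma IsEngagedRel.secretsOf_self_eq_and_observed_eq (hR : IsEngagedRel P R) {x : A}
    {σ τ : List (A × A)} (h : R x σ τ) :
    secretsOf σ x = secretsOf τ x ∧ observed x σ = observed x τ := by
  refine hR.induction (fun x σ τ => secretsOf σ x = secretsOf τ x ∧ observed x σ = observed x τ)
    ?_ ?_ ?_ ?_ ?_ ?_ h
  · exact fun _ => ⟨rfl, rfl⟩
  · exact fun _ _ _ _ ⟨e, e'⟩ => ⟨e.symm, e'.symm⟩
  · exact fun _ _ _ _ _ _ ⟨e₁, e₁'⟩ ⟨e₂, e₂'⟩ => ⟨e₁.trans e₂, e₁'.trans e₂'⟩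
  · intro a b c σ τ _ hM hb hc _ _
    rwa [secretsOf_concat_of_ne hb hc, observed_concat_of_ne hb hc]
  · intro a b σ τ _ ⟨e, e'⟩ hrow _ _ _ _ _
    refine ⟨?_, observed_concat_congr e hrow e'⟩
    rw [secretsOf_concat_of_mem (Or.inl rfl), secretsOf_concat_of_mem (Or.inl rfl)]
    exact congrArg₂ (· ∪ ·) e hrow
  · intro a b σ τ _ ⟨e, e'⟩ hrow _ _ _ _ _
    refine ⟨?_, observed_concat_congr hrow e e'⟩
    rw [secretsOf_concat_of_mem (Or.inr rfl), secretsOf_concat_of_mem (Or.inr rfl)]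
    exact congrArg₂ (· ∪ ·) hrow e

lemma IsEngagedRel.SEx_of_observed_eq_univ (hR : IsEngagedRel P R) {x : A}
    {σ : List (A × A)} (h : observed x σ = Set.univ) : SEx R x σ := fun τ hτ =>
  Set.eq_univ_of_univ_subset <|
    (h.symm.trans (hR.secretsOf_self_eq_and_observed_eq hτ).2).subset.trans
      (observed_subset_secrets x τ)

def MadeMissedCall (R : A → List (A × A) → List (A × A) → Prop) (x : A)
    (σ : List (A × A)) : Prop :=
  ∃ σ' c, σ' ++ [c] <+: σ ∧ c.1 = x ∧ SEx R c.2 σ'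

lemma not_madeMissedCall_nil (x : A) : ¬ MadeMissedCall R x [] := by
  rintro ⟨σ', c, h, -⟩
  simp at h

lemma madeMissedCall_concat {x : A} {σ : List (A × A)} {c : A × A} :
    MadeMissedCall R x (σ ++ [c]) ↔ MadeMissedCall R x σ ∨ c.1 = x ∧ SEx R c.2 σ :=
  exists_concat_prefix_concat_iff

lemma madeMissedCall_concat_iff_of_imp {x : A} {σ : List (A × A)} {c : A × A}
    (h : c.1 = x → ¬ SEx R c.2 σ) :
    MadeMissedCall R x (σ ++ [c]) ↔ MadeMissedCall R x σ := by
  rw [madeMissedCall_concat]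
  exact or_iff_left fun ⟨hx, hs⟩ => h hx hs

lemma IsEngagedRel.madeMissedCall_iff_and_secrets_eq_univ (hR : IsEngagedRel P R) {x : A}
    {σ τ : List (A × A)} (h : R x σ τ) :
    (MadeMissedCall R x σ ↔ MadeMissedCall R x τ) ∧
      (MadeMissedCall R x σ → secrets σ = Set.univ ∧ secrets τ = Set.univ) := by
  refine hR.induction (fun x σ τ => (MadeMissedCall R x σ ↔ MadeMissedCall R x τ) ∧
      (MadeMissedCall R x σ → secrets σ = Set.univ ∧ secrets τ = Set.univ)) ?_ ?_ ?_ ?_ ?_ ?_ h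
  · exact fun x => ⟨Iff.rfl, fun hm => absurd hm (not_madeMissedCall_nil x)⟩
  · exact fun _ _ _ _ ⟨hiff, hfull⟩ => ⟨hiff.symm, fun hm => (hfull (hiff.2 hm)).symm⟩
  · exact fun _ _ _ _ _ _ ⟨hiff, hfull⟩ ⟨hiff', hfull'⟩ =>
      ⟨hiff.trans hiff', fun hm => ⟨(hfull hm).1, (hfull' (hiff.1 hm)).2⟩⟩
  · intro a b c σ τ _ ⟨hiff, hfull⟩ hb _ _ _
    have hM : MadeMissedCall R a (σ ++ [(b, c)]) ↔ MadeMissedCall R a σ :=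
      madeMissedCall_concat_iff_of_imp fun hba => absurd hba.symm hb
    refine ⟨hM.trans hiff, fun hm => ?_⟩
    obtain ⟨hσ, hτ⟩ := hfull (hM.1 hm)
    exact ⟨secrets_eq_univ_of_prefix (List.prefix_append _ _) hσ, hτ⟩
  · intro a b σ τ hrel ⟨hiff, hfull⟩ _ _ _ _ _ hb
    simp only [madeMissedCall_concat, true_and]
    refine ⟨or_congr hiff hb, ?_⟩
    rintro (hm | hbσ)
    · obtain ⟨hσ, hτ⟩ := hfull hm
      exact ⟨secrets_eq_univ_of_prefix (List.prefix_append _ _) hσ,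
        secrets_eq_univ_of_prefix (List.prefix_append _ _) hτ⟩
    · exact ⟨secrets_eq_univ_of_prefix (List.prefix_append _ _) (hbσ σ (hR.rel_self_left hrel b)),
        secrets_eq_univ_of_prefix (List.prefix_append _ _)
          (hb.1 hbσ τ (hR.rel_self_left (hR.1.2.1 _ _ _ hrel) b))⟩
  · intro a b σ τ _ ⟨hiff, hfull⟩ _ hnσ _ hnτ _ _
    have hM : ∀ ρ, ¬ SEx R b ρ → (MadeMissedCall R a (ρ ++ [(b, a)]) ↔ MadeMissedCall R a ρ) :=
      fun ρ hn => madeMissedCall_concat_iff_of_imp fun hba => hba ▸ hn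
    refine ⟨(hM σ hnσ).trans (hiff.trans (hM τ hnτ).symm), fun hm => ?_⟩
    obtain ⟨hσ, hτ⟩ := hfull ((hM σ hnσ).1 hm)
    exact ⟨secrets_eq_univ_of_prefix (List.prefix_append _ _) hσ,
      secrets_eq_univ_of_prefix (List.prefix_append _ _) hτ⟩

lemma IsEngagedRel.SEx_of_madeMissedCall (hR : IsEngagedRel P R) {x : A} {σ : List (A × A)}
    (hm : MadeMissedCall R x σ) : SEx R x σ := fun _ hτ =>
  ((hR.madeMissedCall_iff_and_secrets_eq_univ hτ).2 hm).2

end Engaged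

lemma mem_secretsOf_append_map_mk (σ : List (A × A)) (a : A) {l : List A} {z : A}
    (hz : z ∈ l) : z ∈ secretsOf (σ ++ l.map (Prod.mk a)) a := by
  induction l generalizing σ with
  | nil => simp at hz
  | cons y l ih =>
    rw [List.map_cons, ← List.singleton_append, ← List.append_assoc]
    rcases List.mem_cons.1 hz with rfl | hz
    · refine secretsOf_mono (List.prefix_append _ _) a ?_
      rw [secretsOf_concat_of_mem (Or.inl rfl)]
      exact Or.inr (mem_secretsOf_self σ z)
    · exact ih _ hz

lemma mem_observed_append_map_mk {σ : List (A × A)} {a : A} (hσ : secretsOf σ a = Set.univ)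
    {m : List A} {v : A} (hv : v ∈ m) (z : A) : (v, z) ∈ observed a (σ ++ m.map (Prod.mk a)) := by
  obtain ⟨m₁, m₂, rfl⟩ := List.append_of_mem hv
  refine mem_observed_of_prefix (σ' := σ ++ m₁.map (Prod.mk a)) (by simp) ?_ (Or.inr rfl) z
  exact Set.eq_univ_of_univ_subset (hσ ▸ secretsOf_mono (by simp) a)

section Protocol

variable {a b : A} {l : List A}

def firstTwoRounds (a b : A) (l : List A) : List (A × A) :=
  (l ++ [b]).map (Prod.mk a) ++ l.map (Prod.mk a)

def superExpertCalls (a b : A) (l : List A) : List (A × A) :=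
  firstTwoRounds a b l ++ (l ++ [b]).map (fun y => (y, a))

lemma secretsOf_firstRound (hcover : ∀ z, z = a ∨ z = b ∨ z ∈ l) :
    secretsOf ((l ++ [b]).map (Prod.mk a)) a = Set.univ := by
  refine Set.eq_univ_of_forall fun z => ?_
  rw [List.map_append, List.map_singleton, secretsOf_concat_of_mem (Or.inl rfl)]
  rcases hcover z with rfl | rfl | hz
  · exact Or.inl (mem_secretsOf_self _ z)
  · exact Or.inr (mem_secretsOf_self _ z)
  · exact Or.inl (by simpa using mem_secretsOf_append_map_mk [] a hz)

lemma observed_firstTwoRounds (hcover : ∀ z, z = a ∨ z = b ∨ z ∈ l) :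
    observed a (firstTwoRounds a b l) = Set.univ := by
  have hfull := secretsOf_firstRound hcover
  refine Set.eq_univ_of_forall fun ⟨v, z⟩ => ?_
  rcases hcover v with rfl | rfl | hv
  · refine mem_observed_of_prefix (u := b) (σ' := l.map (Prod.mk v)) ?_ (by simpa using hfull)
      (Or.inl rfl) z
    simp [firstTwoRounds]
  · refine mem_observed_of_prefix (u := v) (σ' := l.map (Prod.mk a)) ?_ (by simpa using hfull)
      (Or.inr rfl) z
    simp [firstTwoRounds]
  · exact mem_observed_append_map_mk hfull hv z

variable {P : A → A → List (A × A) → Prop} {R : A → List (A × A) → List (A × A) → Prop}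

lemma IsEngagedRel.SEx_superExpertCalls (hR : IsEngagedRel P R)
    (hcover : ∀ z, z = a ∨ z = b ∨ z ∈ l) (x : A) : SEx R x (superExpertCalls a b l) := by
  have ha : ∀ ρ, SEx R a (firstTwoRounds a b l ++ ρ) := fun ρ =>
    hR.SEx_of_observed_eq_univ <| Set.eq_univ_of_univ_subset <|
      observed_firstTwoRounds hcover ▸ observed_mono (List.prefix_append _ _)
  rcases eq_or_ne x a with rfl | hxa
  · exact ha _
  have hx : x ∈ l ++ [b] := by
    rcases hcover x with h | rfl | h
    · exact absurd h hxa
    · simp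
    · simp [h]
  obtain ⟨m₁, m₂, hm⟩ := List.append_of_mem hx
  refine hR.SEx_of_madeMissedCall ⟨firstTwoRounds a b l ++ m₁.map (fun y => (y, a)), (x, a),
    ?_, rfl, ha _⟩
  simp [superExpertCalls, hm]

end Protocol

/-- For `n ≥ 2` agents there is a call sequence of length `3n - 4` after which,
in the engaged-agents asynchronous ANY semantics, every agent is a super
expert. -/
theorem engaged_any_super_success [Fintype A]
    (hn : 2 ≤ Fintype.card A)
    (R : A → List (A × A) → List (A × A) → Prop)
    (hR : IsEngagedRel (fun _ _ _ => True) R) :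
    ∃ σ : List (A × A), σ.length = 3 * Fintype.card A - 4 ∧
      ∀ x : A, SEx R x σ := by
  classical
  obtain ⟨a⟩ : Nonempty A := Fintype.card_pos_iff.mp (by omega)
  obtain ⟨b, hba⟩ := Fintype.exists_ne_of_one_lt_card hn a
  let l := ((Finset.univ.erase a).erase b).toList
  have hcover : ∀ z, z = a ∨ z = b ∨ z ∈ l := by
    intro z
    by_cases hza : z = a
    · exact Or.inl hza
    by_cases hzb : z = b
    · exact Or.inr (Or.inl hzb)
    · simp [l, hza, hzb]
  refine ⟨superExpertCalls a b l, ?_, hR.SEx_superExpertCalls hcover⟩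
  simp [superExpertCalls, firstTwoRounds, l, Finset.card_erase_of_mem, hba]
  omega
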